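/- If a group G has no nontrivial R-invisible subgroup, then any R-nullhomologous system of equations over G has at most one solution in G. -/

import Mathlib

open scoped TensorProduct

/-- The set of denominators of (reduced fractional expressions of) elements of `R ⊆ ℚ`. -/
def DR (R : Subring ℚ) : Set ℕ := {d | ∃ q ∈ R, q.den = d}

variable {G H A : Type*} [Group G] [Group H] [Group A]

/-- Evaluation of a monomial over `G` in `n` indeterminates at a tuple of elements of `G`. -/
noncomputable def evalWord {n : ℕ} (g : Fin n → G) :
    Monoid.Coprod G (FreeGroup (Fin n)) →* G :=
  Monoid.Coprod.lift (MonoidHom.id G) (FreeGroup.lift g)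

/-- The projection `G * F → F → F/[F,F]`. -/
noncomputable def toFreeAb (G : Type*) [Group G] (n : ℕ) :
    Monoid.Coprod G (FreeGroup (Fin n)) →* Abelianization (FreeGroup (Fin n)) :=
  Monoid.Coprod.lift 1 Abelianization.of

/-- An `R`-nullhomologous system of equations `xᵢ^e = wᵢ(x₁,…,xₙ)` over `G`. -/
structure NullSys (R : Subring ℚ) (G : Type*) [Group G] where
  n : ℕ
  e : ℕ
  he : e ∈ DR R
  w : Fin n → Monoid.Coprod G (FreeGroup (Fin n))
  nullh : ∀ i, toFreeAb G n (w i) = 1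

/-- A solution of a system of equations over `G`. -/
def NullSys.IsSolution {R : Subring ℚ} (S : NullSys R G) (g : Fin S.n → G) : Prop :=
  ∀ i, (g i) ^ S.e = evalWord g (S.w i)

/-- A group is `R`-closed if every `R`-nullhomologous system over it has a unique solution. -/
def IsRClosed (R : Subring ℚ) (A : Type*) [Group A] : Prop :=
  ∀ S : NullSys R A, ∃! g : Fin S.n → A, S.IsSolution g

/-- A normal subgroup `N ≤ G` is `R`-invisible if it is normally finitely generated and every
element of `N/[G,N]` has (finite) order lying in `D_R`. -/
def IsRInvisible (R : Subring ℚ) {G : Type*} [Group G] (N : Subgroup G) : Prop :=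
  N.Normal ∧
  (∃ s : Finset G, ↑s ⊆ (N : Set G) ∧ Subgroup.normalClosure ↑s = N) ∧
  ∀ x ∈ N, ∃ e ∈ DR R, x ^ e ∈ ⁅(⊤ : Subgroup G), N⁆

/-!
Put `c i = (a i)⁻¹ * b i` and let `N` be the normal closure of the `c i`. Modulo `K = [G, N]`
the `c i` become central, and substituting `a i * c i` for the variables of a nullhomologous
word does not change its value once the `c i` are central. Comparing the equations solved by
`a` and `b` therefore gives `c i ^ e ∈ K`; since the images of the `c i` generate an abelian
subgroup of `G/K`, every element of `N` has its `e`-th power in `K`. So `N` is `R`-invisible,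
hence trivial, and `a = b`.
-/

open Subgroup
open scoped IsMulCommutative commutatorElement

section Evaluation

variable {n : ℕ}

theorem MonoidHom.comp_evalWord (φ : G →* H) (g : Fin n → G) :
    φ.comp (evalWord g) = Monoid.Coprod.lift φ (FreeGroup.lift (φ ∘ g)) := by
  rw [evalWord, Monoid.Coprod.comp_lift]
  congr 1
  exact FreeGroup.ext_hom _ _ fun i => by simp

/-- Substituting `p i * z i` with `z i` central multiplies the value of a word by its image
under `F/[F,F] → center H, xᵢ ↦ z i`, which is trivial on nullhomologous words. -/
theorem lift_mul_central_of_toFreeAb_eq_one (φ : G →* H) (p z : Fin n → H)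
    (hz : ∀ i, z i ∈ center H) {u : Monoid.Coprod G (FreeGroup (Fin n))}
    (hu : toFreeAb G n u = 1) :
    Monoid.Coprod.lift φ (FreeGroup.lift (p * z)) u =
      Monoid.Coprod.lift φ (FreeGroup.lift p) u := by
  set L := Monoid.Coprod.lift φ (FreeGroup.lift p)
  set m : Abelianization (FreeGroup (Fin n)) →* center H :=
    Abelianization.lift (FreeGroup.lift fun i => ⟨z i, hz i⟩)
  set ζ := (center H).subtype.comp m
  have hcomm : ∀ v t, Commute (L v) (ζ t) := fun v t => mem_center_iff.mp (m t).2 (L v)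
  have hsplit : Monoid.Coprod.lift φ (FreeGroup.lift (p * z)) =
      (L.noncommCoprod ζ hcomm).comp ((MonoidHom.id _).prod (toFreeAb G n)) := by
    apply Monoid.Coprod.hom_ext
    · ext x
      simp [L, ζ, toFreeAb]
    · exact FreeGroup.ext_hom _ _ fun i => by simp [L, ζ, m, toFreeAb]
  rw [hsplit]
  simp [hu]

end Evaluation

theorem QuotientGroup.mk_mem_center_of_mem {N : Subgroup G} [N.Normal] {x : G} (hx : x ∈ N) :
    (x : G ⧸ ⁅(⊤ : Subgroup G), N⁆) ∈ center (G ⧸ ⁅(⊤ : Subgroup G), N⁆) := by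
  refine mem_center_iff.mpr fun q => ?_
  obtain ⟨g, rfl⟩ := QuotientGroup.mk_surjective q
  have hg : ⁅(g : G ⧸ ⁅(⊤ : Subgroup G), N⁆), (x : G ⧸ ⁅(⊤ : Subgroup G), N⁆)⁆ = 1 :=
    (map_commutatorElement (QuotientGroup.mk' _) g x).symm.trans
      ((QuotientGroup.eq_one_iff _).mpr (commutator_mem_commutator (mem_top g) hx))
  exact (commutatorElement_eq_one_iff_commute.mp hg).eq

theorem Subgroup.normal_of_le_center {K : Subgroup G} (h : K ≤ center G) : K.Normal :=
  ⟨fun x hx g => by rwa [mem_center_iff.mp (h hx) g, mul_inv_cancel_right]⟩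

theorem pow_eq_one_of_mem_closure_of_subset_center {s : Set G} (hs : s ⊆ center G) {e : ℕ}
    (he : ∀ y ∈ s, y ^ e = 1) {y : G} (hy : y ∈ closure s) : y ^ e = 1 := by
  have hcenter : closure s ≤ center G := (closure_le _).mpr hs
  induction hy using closure_induction with
  | mem y hy => exact he y hy
  | one => exact one_pow e
  | mul x y hx hy ihx ihy =>
    have hxy : Commute x y := mem_center_iff.mp (hcenter hy) x
    rw [hxy.mul_pow, ihx, ihy, one_mul]
  | inv x _ ih => rw [inv_pow, ih, inv_one]

theorem NullSys.pow_eq_one_of_isSolution {R : Subring ℚ}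
    (S : NullSys R G) {a b : Fin S.n → G} (ha : S.IsSolution a) (hb : S.IsSolution b)
    (φ : G →* H) (hc : ∀ i, φ ((a i)⁻¹ * b i) ∈ center H) (i : Fin S.n) :
    φ ((a i)⁻¹ * b i) ^ S.e = 1 := by
  set z := fun i => φ ((a i)⁻¹ * b i)
  have hb_eq : φ ∘ b = (φ ∘ a) * z := funext fun j => by simp [z]
  have hpow : φ (b i) ^ S.e = φ (a i) ^ S.e := by
    rw [← map_pow, ← map_pow, hb i, ha i, ← MonoidHom.comp_apply, ← MonoidHom.comp_apply,
      φ.comp_evalWord, φ.comp_evalWord, hb_eq]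
    exact lift_mul_central_of_toFreeAb_eq_one φ _ z hc (S.nullh i)
  have hcomm : Commute (φ (a i)) (z i) := mem_center_iff.mp (hc i) (φ (a i))
  rwa [show φ (b i) = φ (a i) * z i by simp [z], hcomm.mul_pow, mul_eq_left] at hpow

theorem isRInvisible_normalClosure_range {R : Subring ℚ} {ι : Type*} [Finite ι]
    (c : ι → G) {e : ℕ} (he : e ∈ DR R)
    (hc : ∀ i, (c i : G ⧸ ⁅(⊤ : Subgroup G), normalClosure (Set.range c)⁆) ^ e = 1) :
    IsRInvisible R (normalClosure (Set.range c)) := by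
  classical
  have := Fintype.ofFinite ι
  set N := normalClosure (Set.range c)
  set π := QuotientGroup.mk' ⁅(⊤ : Subgroup G), N⁆
  have hcenter : Set.range (π ∘ c) ⊆ center (G ⧸ ⁅(⊤ : Subgroup G), N⁆) := by
    rintro _ ⟨i, rfl⟩
    exact QuotientGroup.mk_mem_center_of_mem (subset_normalClosure ⟨i, rfl⟩)
  have := normal_of_le_center ((closure_le _).mpr hcenter)
  have hN : N ≤ (closure (Set.range (π ∘ c))).comap π :=
    normalClosure_le_normal fun _ ⟨i, hi⟩ => hi ▸ subset_closure ⟨i, rfl⟩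
  refine ⟨normalClosure_normal,
    ⟨Finset.univ.image c, by simp [N, subset_normalClosure], by simp [N]⟩, fun x hx => ⟨e, he, ?_⟩⟩
  rw [← QuotientGroup.eq_one_iff, QuotientGroup.mk_pow]
  exact pow_eq_one_of_mem_closure_of_subset_center hcenter (by rintro _ ⟨i, rfl⟩; exact hc i)
    (hN hx)

/-- If `G` has no nontrivial `R`-invisible subgroup, then every `R`-nullhomologous system
over `G` has at most one solution. -/
theorem unique_solution_of_no_invisible (R : Subring ℚ) {G : Type*} [Group G]
    (hG : ∀ N : Subgroup G, IsRInvisible R N → N = ⊥)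
    (S : NullSys R G) (a b : Fin S.n → G)
    (ha : S.IsSolution a) (hb : S.IsSolution b) : a = b := by
  set c := fun i => (a i)⁻¹ * b i
  have hcenter : ∀ i, (c i : G ⧸ ⁅(⊤ : Subgroup G), normalClosure (Set.range c)⁆) ∈ center _ :=
    fun i => QuotientGroup.mk_mem_center_of_mem (subset_normalClosure ⟨i, rfl⟩)
  have hinv := isRInvisible_normalClosure_range c S.he
    (S.pow_eq_one_of_isSolution ha hb (QuotientGroup.mk' _) hcenter)
  have hc : Set.range c ⊆ {1} := normalClosure_eq_bot_iff.mp (hG _ hinv)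
  exact funext fun i => inv_mul_eq_one.mp (hc ⟨i, rfl⟩)
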